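/- arXiv:2503.10955 — 4 statements merged into one kernel-verified Lean document; each statement's English description precedes it below -/
import Mathlib

section
/- In the language Imp, resumption bisimilarity is compositional for sequential composition and while loops: for all program terms p, p', q, q' ∈ P and every expression e ∈ Ex, if p ∼res p' and q ∼res q' then p;q ∼res p';q', and if p ∼res p' then (while e p) ∼res (while e p'). -/
/-!
# Statement 0: Compositionality of resumption bisimilarity in Imp

We fix a countably infinite set of program variables (modelled by `ℕ`), arithmetic
expressions built from integer constants, variables and `+,-,*`, stores `ℕ → ℤ`, the
standard expression evaluation map, and the deterministic small-step operational
semantics of Imp, given as a function `step : P → Store → (P × Store) ⊕ Store`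
(`.inl (p', s')` means `p,s → p',s'` and `.inr s'` means `p,s ↓ s'`).

Resumption bisimilarity is the greatest resumption bisimulation (the union of all
resumption bisimulations); the theorem states that it is compositional for
sequential composition and while loops.
-/

namespace ImpLang

/-- Arithmetic expressions over the variable set `ℕ`. -/
inductive Ex : Type
  | const : ℤ → Ex
  | var : ℕ → Ex
  | add : Ex → Ex → Ex
  | sub : Ex → Ex → Ex
  | mul : Ex → Ex → Ex

/-- Variable stores. -/
abbrev Store := ℕ → ℤ

/-- Expression evaluation. -/
def eev : Ex → Store → ℤ
  | .const n, _ => n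
  | .var x, s => s x
  | .add e₁ e₂, s => eev e₁ s + eev e₂ s
  | .sub e₁ e₂, s => eev e₁ s - eev e₂ s
  | .mul e₁ e₂, s => eev e₁ s * eev e₂ s

/-- Store update `s[x := n]`. -/
def upd (s : Store) (x : ℕ) (n : ℤ) : Store := fun y => if y = x then n else s y

/-- Imp program terms. -/
inductive P : Type
  | skip : P
  | assign : ℕ → Ex → P
  | whileE : Ex → P → P
  | seq : P → P → P

/-- The deterministic small-step operational semantics of Imp:
`step p s = .inl (p', s')` means `p,s → p',s'`, and `step p s = .inr s'` means
`p,s ↓ s'`. -/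
def step : P → Store → (P × Store) ⊕ Store
  | .skip, s => .inr s
  | .assign x e, s => .inr (upd s x (eev e s))
  | .whileE e p, s =>
      if eev e s = 0 then .inr s else .inl (.seq p (.whileE e p), s)
  | .seq p q, s =>
      match step p s with
      | .inl (p', s') => .inl (.seq p' q, s')
      | .inr s' => .inl (q, s')

/-- A resumption bisimulation. -/
def IsResBisim (R : P → P → Prop) : Prop :=
  ∀ p q, R p q → ∀ s : Store,
    (∀ p' s', step p s = .inl (p', s') → ∃ q', step q s = .inl (q', s') ∧ R p' q') ∧
    (∀ s', step p s = .inr s' → step q s = .inr s') ∧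
    (∀ q' s', step q s = .inl (q', s') → ∃ p', step p s = .inl (p', s') ∧ R p' q') ∧
    (∀ s', step q s = .inr s' → step p s = .inr s')

/-- Resumption bisimilarity: the greatest resumption bisimulation, i.e. the union of
all resumption bisimulations. -/
def ResBisim (p q : P) : Prop := ∃ R, IsResBisim R ∧ R p q

/-- Congruence closure of `ResBisim` under `seq` and `whileE`. -/
inductive CC : P → P → Prop
  | base {p q} : ResBisim p q → CC p q
  | seq {p p' q q'} : CC p p' → CC q q' → CC (.seq p q) (.seq p' q')
  | whl {p p'} (e : Ex) : CC p p' → CC (.whileE e p) (.whileE e p')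

lemma CC_isResBisim : IsResBisim CC := by
  intro P0 Q0 h
  induction h with
  | base hpq =>
    intro s
    obtain ⟨R, hR, hpq⟩ := hpq
    obtain ⟨h1, h2, h3, h4⟩ := hR _ _ hpq s
    refine ⟨fun p' s' hs => ?_, h2, fun q' s' hs => ?_, h4⟩
    · obtain ⟨q', hq', hRq⟩ := h1 p' s' hs
      exact ⟨q', hq', .base ⟨R, hR, hRq⟩⟩
    · obtain ⟨p', hp', hRq⟩ := h3 q' s' hs
      exact ⟨p', hp', .base ⟨R, hR, hRq⟩⟩
  | @seq p p' q q' hp hq ihp ihq =>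
    intro s
    obtain ⟨h1, h2, h3, h4⟩ := ihp s
    refine ⟨fun r s' hs => ?_, fun s' hs => ?_, fun r s' hs => ?_, fun s' hs => ?_⟩
    · simp only [step] at hs
      rcases hst : step p s with ⟨p₁, s₁⟩ | s₁ <;> rw [hst] at hs
      · obtain ⟨q₁, hq₁, hC⟩ := h1 p₁ s₁ hst
        cases hs
        exact ⟨.seq q₁ q', by simp [step, hq₁], .seq hC hq⟩
      · have := h2 s₁ hst
        cases hs
        exact ⟨q', by simp [step, this], hq⟩
    · simp only [step] at hs
      rcases hst : step p s with ⟨p₁, s₁⟩ | s₁ <;> rw [hst] at hs <;> cases hs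
    · simp only [step] at hs
      rcases hst : step p' s with ⟨p₁, s₁⟩ | s₁ <;> rw [hst] at hs
      · obtain ⟨p₂, hp₂, hC⟩ := h3 p₁ s₁ hst
        cases hs
        exact ⟨.seq p₂ q, by simp [step, hp₂], .seq hC hq⟩
      · have := h4 s₁ hst
        cases hs
        exact ⟨q, by simp [step, this], hq⟩
    · simp only [step] at hs
      rcases hst : step p' s with ⟨p₁, s₁⟩ | s₁ <;> rw [hst] at hs <;> cases hs
  | @whl p p' e hp ihp =>
    intro s
    by_cases he : eev e s = 0
    · refine ⟨?_, ?_, ?_, ?_⟩ <;> intro a b <;> simp_all [step]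
    · refine ⟨fun r s' hs => ?_, ?_, fun r s' hs => ?_, ?_⟩
      · simp only [step, if_neg he] at hs
        cases hs
        exact ⟨_, by simp [step, he], .seq hp (.whl e hp)⟩
      · intro s' hs; simp [step, he] at hs
      · simp only [step, if_neg he] at hs
        cases hs
        exact ⟨_, by simp [step, he], .seq hp (.whl e hp)⟩
      · intro s' hs; simp [step, he] at hs

/-- resumption bisimilarity is compositional for sequential
composition and while loops. -/
theorem resumption_bisimilarity_compositional :
    (∀ p p' q q' : P,
        ResBisim p p' → ResBisim q q' → ResBisim (.seq p q) (.seq p' q')) ∧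
    (∀ (e : Ex) (p p' : P),
        ResBisim p p' → ResBisim (.whileE e p) (.whileE e p')) := by
  exact ⟨fun p p' q q' hp hq => ⟨CC, CC_isResBisim, .seq (.base hp) (.base hq)⟩,
    fun e p p' hp => ⟨CC, CC_isResBisim, .whl e (.base hp)⟩⟩

end ImpLang
end

section
/- In the language Imp, trace equivalence is compositional for sequential composition and while loops: for all program terms p, p', q, q' ∈ P and every expression e ∈ Ex, if trc(p) = trc(p') and trc(q) = trc(q') then trc(p;q) = trc(p';q'), and if trc(p) = trc(p') then trc(while e p) = trc(while e p'). -/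
/-!
# Statement 1: Compositionality of trace equivalence in Imp
-/
namespace ImpLang

/-- Iterated execution of the small-step semantics: `runF c n` is the configuration
reached after `n` steps from `c` (a running configuration `.inl (p,s)` or a
terminated one `.inr s'`), and `none` if the execution stopped strictly before. -/
def runF : (P × Store) ⊕ Store → ℕ → Option ((P × Store) ⊕ Store)
  | c, 0 => some c
  | c, n+1 =>
      match runF c n with
      | some (.inl (p, s)) => some (step p s)
      | _ => none

/-- The trace map of Imp, encoding the (nonempty, finite or infinite) sequence
`trc(p)(s) ∈ 𝒮^∞` as a function `ℕ → Option (Store ⊕ Store)`: the `n`-th entry is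
`some (.inl sₙ)` for an intermediate store produced by a transition `→`,
`some (.inr s')` for the final store produced by `↓`, and `none` beyond the end of a
finite trace. Thus a finite trace `(s₁,…,sₙ,s')` is the function sending
`0,…,n-1` to `some (.inl sᵢ₊₁)`, `n` to `some (.inr s')` and everything else to
`none`, and an infinite trace `(s₁,s₂,…)` is the function sending each `n` to
`some (.inl sₙ₊₁)`. -/
def trc (p : P) (s : Store) : ℕ → Option (Store ⊕ Store) := fun n =>
  match runF (.inl (p, s)) (n+1) with
  | some (.inl (_, s')) => some (.inl s')
  | some (.inr s') => some (.inr s')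
  | none => none

open Classical in
/-- The cost map of Imp: `cst p s = some (n, s')` iff `trc p s = (s₁,…,sₙ,s')` is
finite, and `cst p s = none` (the element `*`) iff `trc p s` is infinite. -/
noncomputable def cst (p : P) (s : Store) : Option (ℕ × Store) :=
  if h : ∃ ns : ℕ × Store, trc p s ns.1 = some (.inr ns.2) then some h.choose
  else none

/-- The termination map of Imp: `ter p s = some s'` iff `trc p s` is finite with
last element `s'`, and `ter p s = none` (the element `*`) iff `trc p s` is
infinite. -/
noncomputable def ter (p : P) (s : Store) : Option Store := (cst p s).map Prod.snd

end ImpLang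

namespace ImpLang

abbrev Cfg := (P × Store) ⊕ Store

def post : Option Cfg → Option (Store ⊕ Store)
  | some (.inl (_, s)) => some (.inl s)
  | some (.inr s) => some (.inr s)
  | none => none

lemma trc_eq (p : P) (s : Store) (n : ℕ) :
    trc p s n = post (runF (.inl (p, s)) (n+1)) := by
  unfold trc post
  rcases h : runF (.inl (p, s)) (n+1) with _ | (⟨p', s'⟩ | s') <;> simp

lemma runF_succ (c : Cfg) (n : ℕ) :
    runF c (n+1) = match runF c n with
      | some (.inl (p, s)) => some (step p s)
      | _ => none := rfl

lemma runF_add (n m : ℕ) (c : Cfg) :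
    runF c (m + n) = (runF c m).bind (fun d => runF d n) := by
  induction n with
  | zero => cases h : runF c m <;> simp [runF, h]
  | succ n ih =>
    rw [show m + (n+1) = (m+n)+1 from rfl, runF_succ, ih]
    cases h : runF c m with
    | none => simp
    | some d => simp [runF_succ d n]

lemma seq_run (p q : P) (s : Store) :
    ∀ n p₁ s₁, runF (.inl (p, s)) n = some (.inl (p₁, s₁)) →
      runF (.inl (.seq p q, s)) n = some (.inl (.seq p₁ q, s₁)) := by
  intro n
  induction n with
  | zero =>
    intro p₁ s₁ h
    simp only [runF] at h ⊢
    obtain ⟨h1, h2⟩ : p₁ = p ∧ s₁ = s := by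
      injection h with h; injection h with h
      exact ⟨congrArg Prod.fst h.symm, congrArg Prod.snd h.symm⟩
    subst h1; subst h2; rfl
  | succ n ih =>
    intro p₁ s₁ h
    rw [runF_succ] at h ⊢
    rcases h0 : runF (.inl (p, s)) n with _ | (⟨p₀, s₀⟩ | s₀) <;> rw [h0] at h
    · exact absurd h (by simp)
    · rw [ih p₀ s₀ h0]
      have h' : step p₀ s₀ = .inl (p₁, s₁) := by injection h
      show some (step (.seq p₀ q) s₀) = _
      simp only [step, h']
    · exact absurd h (by simp)

lemma seq_term (p q : P) (s s' : Store) (k : ℕ) (h : trc p s k = some (.inr s')) :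
    runF (.inl (.seq p q, s)) (k+1) = some (.inl (q, s')) := by
  rw [trc_eq] at h
  rcases h0 : runF (.inl (p, s)) (k+1) with _ | (⟨p₀, s₀⟩ | s₀) <;> rw [h0] at h <;>
    simp only [post] at h
  · exact absurd h (by simp)
  · exact absurd h (by simp)
  have hs : s₀ = s' := by injection h with h; injection h
  subst hs
  rw [runF_succ] at h0 ⊢
  rcases h1 : runF (.inl (p, s)) k with _ | (⟨p₂, s₂⟩ | s₂) <;> rw [h1] at h0
  · exact absurd h0 (by simp)
  · rw [seq_run p q s k p₂ s₂ h1]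
    have h' : step p₂ s₂ = .inr s₀ := by injection h0
    show some (step (.seq p₂ q) s₂) = _
    simp only [step, h']
  · exact absurd h0 (by simp)

lemma runF_none_mono (c : Cfg) {n m : ℕ} (hle : n ≤ m) (h : runF c n = none) :
    runF c m = none := by
  induction m with
  | zero => exact (Nat.le_zero.mp hle) ▸ h
  | succ m ih =>
    rcases Nat.lt_or_ge n (m+1) with h1 | h1
    · rw [runF_succ, ih (Nat.lt_succ_iff.mp h1)]
    · exact (Nat.le_antisymm hle h1) ▸ h

lemma trc_none_iff (p : P) (s : Store) (n : ℕ) :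
    trc p s n = none ↔ runF (.inl (p, s)) (n+1) = none := by
  rw [trc_eq]
  rcases h : runF (.inl (p, s)) (n+1) with _ | (⟨p', s'⟩ | s') <;> simp [post]

lemma trc_none_mono (p : P) (s : Store) {n m : ℕ} (hle : n ≤ m)
    (h : trc p s n = none) : trc p s m = none := by
  rw [trc_none_iff] at h ⊢
  exact runF_none_mono _ (Nat.succ_le_succ hle) h

lemma trc_none_ex (p : P) (s : Store) :
    ∀ n, trc p s n = none → ∃ k, k < n ∧ ∃ s', trc p s k = some (.inr s') := by
  intro n
  induction n with
  | zero =>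
    intro h
    rw [trc_none_iff, runF_succ] at h
    simp only [runF] at h
    exact absurd h (by simp)
  | succ n ih =>
    intro h
    rw [trc_none_iff, runF_succ] at h
    rcases h0 : runF (.inl (p, s)) (n+1) with _ | (⟨p', s'⟩ | s') <;> rw [h0] at h
    · obtain ⟨k, hk, hs⟩ := ih ((trc_none_iff p s n).mpr h0)
      exact ⟨k, Nat.lt_succ_of_lt hk, hs⟩
    · exact absurd h (by simp)
    · refine ⟨n, Nat.lt_succ_self n, s', ?_⟩
      rw [trc_eq, h0]; rfl

lemma seq_after (p q : P) (s s' : Store) (k : ℕ) (h : trc p s k = some (.inr s')) :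
    ∀ m, trc (.seq p q) s (k + 1 + m) = trc q s' m := by
  intro m
  rw [trc_eq, trc_eq]
  rw [show k + 1 + m + 1 = (k + 1) + (m + 1) from by omega, runF_add,
    seq_term p q s s' k h]
  rfl

open Classical in
noncomputable def seqF (f : ℕ → Option (Store ⊕ Store))
    (g : Store → ℕ → Option (Store ⊕ Store)) (n : ℕ) : Option (Store ⊕ Store) :=
  match f n with
  | some (.inl s') => some (.inl s')
  | some (.inr s') => some (.inl s')
  | none =>
    if h : ∃ x : ℕ × Store, f x.1 = some (.inr x.2) then
      g h.choose.2 (n - h.choose.1 - 1)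
    else none

lemma seq_trc (p q : P) (s : Store) (n : ℕ) :
    trc (.seq p q) s n = seqF (trc p s) (trc q) n := by
  rcases h : trc p s n with _ | (s₁ | s₁)
  · -- none case
    have hex : ∃ x : ℕ × Store, trc p s x.1 = some (.inr x.2) := by
      obtain ⟨k, _, s', hk⟩ := trc_none_ex p s n h
      exact ⟨(k, s'), hk⟩
    rw [seqF, h]
    simp only [hex, dif_pos]
    set x := hex.choose with hx
    have hxspec : trc p s x.1 = some (.inr x.2) := hex.choose_spec
    have hlt : x.1 < n := by
      by_contra hge
      rw [trc_none_mono p s (Nat.le_of_not_lt hge) h] at hxspec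
      exact absurd hxspec (by simp)
    have := seq_after p q s x.2 x.1 hxspec (n - x.1 - 1)
    rw [show x.1 + 1 + (n - x.1 - 1) = n from by omega] at this
    exact this
  · -- inl case
    have h' := h
    rw [trc_eq] at h'
    rcases h0 : runF (.inl (p, s)) (n+1) with _ | (⟨p₁, s₂⟩ | s₂) <;> rw [h0] at h' <;>
      simp only [post] at h'
    · exact absurd h' (by simp)
    · have hs : s₂ = s₁ := by injection h' with h'; injection h'
      subst hs
      rw [seqF, h, trc_eq, seq_run p q s (n+1) p₁ s₂ h0]
      rfl
    · exact absurd h' (by simp)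
  · -- inr case
    rw [seqF, h, trc_eq, seq_term p q s s₁ n h]
    rfl

lemma runF_inr (s : Store) : ∀ k, runF (Sum.inr s : Cfg) (k+1) = none := by
  intro k
  induction k with
  | zero => rfl
  | succ k ih => rw [runF_succ, ih]

lemma while_step0 (e : Ex) (p : P) (s : Store) (h : eev e s = 0) :
    runF (.inl (.whileE e p, s)) 1 = some (.inr s) := by
  show some (step (.whileE e p) s) = _
  simp only [step, h, if_pos]

lemma while_step1 (e : Ex) (p : P) (s : Store) (h : ¬ eev e s = 0) :
    runF (.inl (.whileE e p, s)) 1 = some (.inl (.seq p (.whileE e p), s)) := by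
  show some (step (.whileE e p) s) = _
  simp only [step, h, if_neg, ite_false]

lemma while_trc_succ (e : Ex) (p : P) (s : Store) (h : ¬ eev e s = 0) (n : ℕ) :
    trc (.whileE e p) s (n+1) = trc (.seq p (.whileE e p)) s n := by
  rw [trc_eq, trc_eq, show n+1+1 = 1 + (n+1) from by omega, runF_add,
    while_step1 e p s h]
  rfl

lemma while_trc_eq (e : Ex) (p p' : P) (h : trc p = trc p') :
    ∀ n s, trc (.whileE e p) s n = trc (.whileE e p') s n := by
  intro n
  induction n using Nat.strong_induction_on with
  | _ n ih =>
    intro s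
    by_cases h0 : eev e s = 0
    · cases n with
      | zero => rw [trc_eq, trc_eq, while_step0 e p s h0, while_step0 e p' s h0]
      | succ m =>
        have key : ∀ r : P, runF (.inl (.whileE e r, s)) (m+1+1) = none := by
          intro r
          rw [show m+1+1 = 1 + (m+1) from by omega, runF_add, while_step0 e r s h0]
          simp [runF_inr]
        rw [trc_eq, trc_eq, key p, key p']
    · cases n with
      | zero => rw [trc_eq, trc_eq, while_step1 e p s h0, while_step1 e p' s h0]; rfl
      | succ m =>
        rw [while_trc_succ e p s h0 m, while_trc_succ e p' s h0 m, seq_trc, seq_trc,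
          congrFun h s]
        rw [seqF, seqF]
        rcases h1 : trc p' s m with _ | (s₁ | s₁)
        · by_cases hex : ∃ x : ℕ × Store, trc p' s x.1 = some (.inr x.2)
          · simp only [hex, dif_pos]
            exact ih (m - hex.choose.1 - 1) (by omega) _
          · simp only [hex, dif_neg, not_false_iff]
        · rfl
        · rfl

/-- trace equivalence is compositional for sequential composition
and while loops. -/
theorem trace_equivalence_compositional :
    (∀ p p' q q' : P,
        trc p = trc p' → trc q = trc q' → trc (.seq p q) = trc (.seq p' q')) ∧
    (∀ (e : Ex) (p p' : P),
        trc p = trc p' → trc (.whileE e p) = trc (.whileE e p')) := by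
  constructor
  · intro p p' q q' hp hq
    funext s n
    rw [seq_trc, seq_trc, congrFun hp s, hq]
  · intro e p p' hp
    funext s n
    exact while_trc_eq e p p' hp n s

end ImpLang
end

section
/- In the language Imp, termination equivalence is compositional for sequential composition and while loops: for all program terms p, p', q, q' ∈ P and every expression e ∈ Ex, if ter(p) = ter(p') and ter(q) = ter(q') then ter(p;q) = ter(p';q'), and if ter(p) = ter(p') then ter(while e p) = ter(while e p'). -/
/-!
Since the small-step semantics is deterministic, `ter p s = some s'` holds exactly when `p`
started in `s` terminates in `s'`; so `ter p` and the big-step termination relation of `p`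
determine each other. That relation is compositional: for `p;q` it is the relational composition
of the relations of `p` and `q`, and for `while e p` it is the least relation closed under the
loop rules over the relation of `p`.
-/

namespace ImpLang

def Terminates (p : P) (s s' : Store) : Prop := ∃ n, runF (.inl (p, s)) n = some (.inr s')

theorem runF_inr_succ (s : Store) (n : ℕ) : runF (.inr s) (n + 1) = none := by
  induction n with
  | zero => rfl
  | succ n ih => rw [runF, ih]

theorem runF_inl_succ (p : P) (s : Store) (n : ℕ) :
    runF (.inl (p, s)) (n + 1) = runF (step p s) n := by
  induction n with
  | zero => rfl
  | succ n ih => rw [runF, ih]; rfl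

theorem runF_inr_eq_some_inr {a b : Store} {n : ℕ} :
    runF (.inr a) n = some (.inr b) ↔ n = 0 ∧ a = b := by
  cases n with
  | zero => simp [runF]
  | succ n => simp [runF_inr_succ]

theorem runF_eq_some_inr_unique {c : (P × Store) ⊕ Store} {n m : ℕ} {a b : Store}
    (ha : runF c n = some (.inr a)) (hb : runF c m = some (.inr b)) : a = b := by
  induction n generalizing c m with
  | zero =>
    obtain rfl : c = .inr a := by simpa [runF] using ha
    exact (runF_inr_eq_some_inr.1 hb).2
  | succ n ih =>
    obtain ⟨p, s⟩ | s := c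
    · cases m with
      | zero => simp [runF] at hb
      | succ m =>
        rw [runF_inl_succ] at ha hb
        exact ih ha hb
    · simp [runF_inr_succ] at ha

theorem Terminates.unique {p : P} {s a b : Store} (ha : Terminates p s a)
    (hb : Terminates p s b) : a = b :=
  runF_eq_some_inr_unique ha.choose_spec hb.choose_spec

theorem runF_seq_eq_some_inr {p q : P} {s s'' : Store} {n : ℕ} :
    runF (.inl (.seq p q, s)) n = some (.inr s'') ↔
      ∃ t k j, n = k + j ∧ runF (.inl (p, s)) k = some (.inr t) ∧
        runF (.inl (q, t)) j = some (.inr s'') := by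
  constructor
  · intro h
    induction n generalizing p s with
    | zero => simp [runF] at h
    | succ n ih =>
      rw [runF_inl_succ] at h
      cases hp : step p s with
      | inl c =>
        simp only [step, hp] at h
        obtain ⟨t, k, j, rfl, hk, hj⟩ := ih h
        exact ⟨t, k + 1, j, by omega, by rw [runF_inl_succ, hp]; exact hk, hj⟩
      | inr t =>
        simp only [step, hp] at h
        exact ⟨t, 1, n, by omega, by rw [runF_inl_succ, hp]; rfl, h⟩
  · rintro ⟨t, k, j, rfl, hk, hj⟩
    induction k generalizing p s with
    | zero => simp [runF] at hk
    | succ k ih =>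
      rw [runF_inl_succ] at hk
      rw [show k + 1 + j = k + j + 1 by omega, runF_inl_succ]
      cases hp : step p s with
      | inl c =>
        rw [hp] at hk
        simpa only [step, hp] using ih hk
      | inr t' =>
        rw [hp, runF_inr_eq_some_inr] at hk
        obtain ⟨rfl, rfl⟩ := hk
        simpa only [step, hp, zero_add] using hj

theorem terminates_seq (p q : P) :
    Terminates (.seq p q) = Relation.Comp (Terminates p) (Terminates q) := by
  funext s s''
  apply propext
  constructor
  · rintro ⟨n, hn⟩
    obtain ⟨t, k, j, -, hk, hj⟩ := runF_seq_eq_some_inr.1 hn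
    exact ⟨t, ⟨k, hk⟩, ⟨j, hj⟩⟩
  · rintro ⟨t, ⟨k, hk⟩, ⟨j, hj⟩⟩
    exact ⟨k + j, runF_seq_eq_some_inr.2 ⟨t, k, j, rfl, hk, hj⟩⟩

inductive WhileRel (e : Ex) (T : Store → Store → Prop) : Store → Store → Prop
  | exit {s : Store} : eev e s = 0 → WhileRel e T s s
  | iter {s t s' : Store} : eev e s ≠ 0 → T s t → WhileRel e T t s' → WhileRel e T s s'

theorem whileRel_of_runF {e : Ex} {p : P} {s s' : Store} {n : ℕ}
    (h : runF (.inl (.whileE e p, s)) n = some (.inr s')) : WhileRel e (Terminates p) s s' := by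
  induction n using Nat.strong_induction_on generalizing s with
  | _ n ih =>
    cases n with
    | zero => simp [runF] at h
    | succ n =>
      rw [runF_inl_succ] at h
      by_cases h0 : eev e s = 0
      · simp only [step, h0, if_true, runF_inr_eq_some_inr] at h
        obtain ⟨-, rfl⟩ := h
        exact .exit h0
      · simp only [step, h0, if_false] at h
        obtain ⟨t, k, j, rfl, hk, hj⟩ := runF_seq_eq_some_inr.1 h
        exact .iter h0 ⟨k, hk⟩ (ih j (by omega) hj)

theorem Terminates.of_whileRel {e : Ex} {p : P} {s s' : Store}
    (h : WhileRel e (Terminates p) s s') : Terminates (.whileE e p) s s' := by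
  induction h with
  | exit h0 => exact ⟨1, by simp [runF, step, h0]⟩
  | iter h0 hbody _ ih =>
    obtain ⟨n, hn⟩ : Terminates (.seq p (.whileE e p)) _ _ := by
      rw [terminates_seq]
      exact ⟨_, hbody, ih⟩
    exact ⟨n + 1, by simpa only [runF_inl_succ, step, h0, if_false] using hn⟩

theorem terminates_while (e : Ex) (p : P) :
    Terminates (.whileE e p) = WhileRel e (Terminates p) := by
  funext s s'
  exact propext ⟨fun ⟨_, h⟩ => whileRel_of_runF h, Terminates.of_whileRel⟩

theorem trc_eq_some_inr {p : P} {s s' : Store} {n : ℕ} :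
    trc p s n = some (.inr s') ↔ runF (.inl (p, s)) (n + 1) = some (.inr s') := by
  unfold trc
  split <;> simp_all

theorem terminates_iff_exists_trc {p : P} {s s' : Store} :
    Terminates p s s' ↔ ∃ n, trc p s n = some (.inr s') := by
  simp only [trc_eq_some_inr, Terminates]
  constructor
  · rintro ⟨_ | n, h⟩
    · simp [runF] at h
    · exact ⟨n, h⟩
  · rintro ⟨n, h⟩
    exact ⟨n + 1, h⟩

theorem ter_eq_some_iff {p : P} {s s' : Store} : ter p s = some s' ↔ Terminates p s s' := by
  unfold ter cst
  split_ifs with h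
  · have hchoose : Terminates p s h.choose.2 := terminates_iff_exists_trc.2 ⟨_, h.choose_spec⟩
    simp only [Option.map_some, Option.some.injEq]
    exact ⟨fun h' => h' ▸ hchoose, hchoose.unique⟩
  · simp only [Option.map_none, reduceCtorEq, false_iff]
    intro hs
    obtain ⟨n, hn⟩ := terminates_iff_exists_trc.1 hs
    exact h ⟨(n, s'), hn⟩

theorem ter_eq_ter_iff {p p' : P} : ter p = ter p' ↔ Terminates p = Terminates p' := by
  constructor
  · intro h
    funext s s'
    rw [← ter_eq_some_iff, ← ter_eq_some_iff, h]
  · intro h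
    funext s
    exact Option.ext fun s' => by rw [ter_eq_some_iff, ter_eq_some_iff, h]

/-- termination equivalence is compositional for sequential
composition and while loops. -/
theorem termination_equivalence_compositional :
    (∀ p p' q q' : P,
        ter p = ter p' → ter q = ter q' → ter (.seq p q) = ter (.seq p' q')) ∧
    (∀ (e : Ex) (p p' : P),
        ter p = ter p' → ter (.whileE e p) = ter (.whileE e p')) := by
  refine ⟨fun p p' q q' hp hq => ?_, fun e p p' hp => ?_⟩
  · rw [ter_eq_ter_iff] at hp hq ⊢
    rw [terminates_seq, terminates_seq, hp, hq]
  · rw [ter_eq_ter_iff] at hp ⊢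
    rw [terminates_while, terminates_while, hp]

end ImpLang
end

section
/- Let (X, χ) be a deterministic reader–writer transition system over a state set 𝒮 in which there is no infinite chain c₀ → c₁ → c₂ → ⋯ of consecutive silent writer transitions. Then trace similarity coincides with trace equivalence: two readers p, q are related by the greatest trace simulation iff trc^r(p) = trc^r(q), and two writers c, d are related by the greatest trace simulation iff trc^w(c) = trc^w(d). -/
/-! # Statement 4: trace similarity = trace equivalence for deterministic reader–writer systems without silent divergence -/
namespace RW

/-- A deterministic reader–writer transition system over a state set `S`:
`rstep p s = c` means `p,s → c`; `wstep c = .inl (d,s)` means `c →ˢ d`;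
`wstep c = .inr (.inl d)` means `c → d`; `wstep c = .inr (.inr s)` means `c ↓ s`. -/
structure DRW (S : Type) where
  Rd : Type
  Wr : Type
  rstep : Rd → S → Wr
  wstep : Wr → (Wr × S) ⊕ (Wr ⊕ S)

variable {S : Type}

/-- The output transition `c →ˢ d`. -/
def OutTr (M : DRW S) (c : M.Wr) (s : S) (d : M.Wr) : Prop := M.wstep c = .inl (d, s)

/-- The silent transition `c → d`. -/
def TauTr (M : DRW S) (c d : M.Wr) : Prop := M.wstep c = .inr (.inl d)

/-- The termination transition `c ↓ s`. -/
def DownTr (M : DRW S) (c : M.Wr) (s : S) : Prop := M.wstep c = .inr (.inr s)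

/-- The weak silent transition `c ⇒ d`: a finite chain of silent steps. -/
def WSil (M : DRW S) : M.Wr → M.Wr → Prop := Relation.ReflTransGen (TauTr M)

/-- The weak output transition `c ⇒ˢ d`: `c ⇒ c' →ˢ d` for some `c'`. -/
def WOut (M : DRW S) (c : M.Wr) (s : S) (d : M.Wr) : Prop :=
  ∃ c', WSil M c c' ∧ OutTr M c' s d

/-- The weak termination transition `c ⇓ s`: `c ⇒ c' ↓ s` for some `c'`. -/
def WDone (M : DRW S) (c : M.Wr) (s : S) : Prop :=
  ∃ c', WSil M c c' ∧ DownTr M c' s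

/-- `ReachL M c l d`: from `c` there is a chain of weak output transitions
producing the list `l` of states and ending in `d`. -/
def ReachL (M : DRW S) : M.Wr → List S → M.Wr → Prop
  | c, [], d => c = d
  | c, s :: l, d => ∃ c', WOut M c s c' ∧ ReachL M c' l d

/-- `TrcEntry M c n v` holds iff the `n`-th entry (0-indexed) of the trace
`trc^w(c)` is `v`, where `v = .inl s` tags an intermediate output state and
`v = .inr s` tags the final state of a finite trace. -/
def TrcEntry (M : DRW S) (c : M.Wr) (n : ℕ) (v : S ⊕ S) : Prop :=
  (∃ l d s d', ReachL M c l d ∧ l.length = n ∧ WOut M d s d' ∧ v = .inl s) ∨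
  (∃ l d s, ReachL M c l d ∧ l.length = n ∧ WDone M d s ∧ v = .inr s)

open Classical in
/-- The writer trace map `trc^w : X_w → 𝒮^∞`, with a (nonempty, finite or infinite)
trace encoded as a function `ℕ → Option (S ⊕ S)`: a finite trace `(s₁,…,sₙ,s)`
sends `0,…,n-1` to `some (.inl sᵢ₊₁)`, `n` to `some (.inr s)` and all larger
numbers to `none`; an infinite trace `(s₁,s₂,…)` sends each `n` to
`some (.inl sₙ₊₁)`. -/
noncomputable def trcW (M : DRW S) (c : M.Wr) : ℕ → Option (S ⊕ S) := fun n =>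
  if h : ∃ v, TrcEntry M c n v then some h.choose else none

/-- The reader trace map `trc^r : X_r → (𝒮^∞)^𝒮`: `trc^r(p)(s) = trc^w(c)` where
`p,s → c`. -/
noncomputable def trcR (M : DRW S) (p : M.Rd) (s : S) : ℕ → Option (S ⊕ S) :=
  trcW M (M.rstep p s)

open Classical in
/-- The writer cost map: `cstW M c = some (n,s)` iff `trc^w(c) = (s₁,…,sₙ,s)` is
finite, and `none` (i.e. `*`) iff `trc^w(c)` is infinite. -/
noncomputable def cstW (M : DRW S) (c : M.Wr) : Option (ℕ × S) :=
  if h : ∃ ns : ℕ × S, trcW M c ns.1 = some (.inr ns.2) then some h.choose else none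

/-- The reader cost map. -/
noncomputable def cstR (M : DRW S) (p : M.Rd) (s : S) : Option (ℕ × S) :=
  cstW M (M.rstep p s)

/-- The writer termination map: the last element of a finite trace, `none` (`*`)
for an infinite trace. -/
noncomputable def terW (M : DRW S) (c : M.Wr) : Option S := (cstW M c).map Prod.snd

/-- The reader termination map. -/
noncomputable def terR (M : DRW S) (p : M.Rd) (s : S) : Option S :=
  (cstR M p s).map Prod.snd

end RW

namespace RW

variable {S : Type}

/-- A trace simulation on a deterministic reader–writer transition system. -/
def IsTraceSim (M : DRW S) (Rr : M.Rd → M.Rd → Prop) (Rw : M.Wr → M.Wr → Prop) : Prop :=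
  (∀ p q s c, Rr p q → M.rstep p s = c → ∃ d, M.rstep q s = d ∧ Rw c d) ∧
  (∀ c d c', Rw c d → TauTr M c c' → ∃ d', WSil M d d' ∧ Rw c' d') ∧
  (∀ c d s c', Rw c d → OutTr M c s c' → ∃ d', WOut M d s d' ∧ Rw c' d') ∧
  (∀ c d s, Rw c d → DownTr M c s → WDone M d s)

/-- Two readers are related by the greatest trace simulation (the union of all
trace simulations). -/
def TraceSimR (M : DRW S) (p q : M.Rd) : Prop :=
  ∃ Rr Rw, IsTraceSim M Rr Rw ∧ Rr p q

/-- Two writers are related by the greatest trace simulation. -/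
def TraceSimW (M : DRW S) (c d : M.Wr) : Prop :=
  ∃ Rr Rw, IsTraceSim M Rr Rw ∧ Rw c d

/-!
Silent steps are deterministic, so the silent run from a writer is a single chain and weak
transitions are deterministic: the `n`-th trace entry is then determined recursively, by the first
weak output or termination step. A trace simulation transports every trace entry from `c` to `d`.
Without silent divergence every writer has a first entry, so the trace of `c` is either infinite or
ends with a final entry `.inr s` at some position `k`; `d` has the same final entry and hence no
entries beyond `k`, so the traces coincide. Conversely, trace equality is itself a trace simulation:
a silent step leaves the trace unchanged and an output step `s` drops its first entry `.inl s`.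
-/

variable {M : DRW S}

theorem tauTr_rightUnique : Relator.RightUnique (TauTr M) := fun _ _ _ h₁ h₂ => by
  rw [TauTr, h₁] at h₂
  simpa using h₂

def Stable (M : DRW S) (c : M.Wr) : Prop := ∀ d, ¬ TauTr M c d

theorem OutTr.stable {c d : M.Wr} {s : S} (h : OutTr M c s d) : Stable M c := fun _ h' => by
  rw [TauTr, h] at h'
  cases h'

theorem DownTr.stable {c : M.Wr} {s : S} (h : DownTr M c s) : Stable M c := fun _ h' => by
  rw [TauTr, h] at h'
  cases h'

theorem Stable.eq_of_wSil {a b : M.Wr} (ha : Stable M a) (h : WSil M a b) : a = b :=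
  (Relation.ReflTransGen.cases_head h).elim id fun ⟨x, hx, _⟩ => (ha x hx).elim

theorem Stable.wSil_of_wSil {c c' e : M.Wr} (he : Stable M e) (hce : WSil M c e)
    (hcc' : WSil M c c') : WSil M c' e := by
  rcases hcc'.total_of_right_unique tauTr_rightUnique hce with h | h
  · exact h
  · exact he.eq_of_wSil h ▸ .refl

theorem Stable.eq_of_wSil_of_wSil {c e₁ e₂ : M.Wr} (h₁ : Stable M e₁) (h₂ : Stable M e₂)
    (hc₁ : WSil M c e₁) (hc₂ : WSil M c e₂) : e₁ = e₂ :=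
  h₁.eq_of_wSil (h₂.wSil_of_wSil hc₂ hc₁)

theorem WOut.unique {c d₁ d₂ : M.Wr} {s₁ s₂ : S} (h₁ : WOut M c s₁ d₁) (h₂ : WOut M c s₂ d₂) :
    s₁ = s₂ ∧ d₁ = d₂ := by
  obtain ⟨e₁, hc₁, ho₁⟩ := h₁
  obtain ⟨e₂, hc₂, ho₂⟩ := h₂
  obtain rfl := ho₁.stable.eq_of_wSil_of_wSil ho₂.stable hc₁ hc₂
  rw [OutTr, ho₁] at ho₂
  simp_all

theorem WDone.unique {c : M.Wr} {s₁ s₂ : S} (h₁ : WDone M c s₁) (h₂ : WDone M c s₂) :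
    s₁ = s₂ := by
  obtain ⟨e₁, hc₁, ho₁⟩ := h₁
  obtain ⟨e₂, hc₂, ho₂⟩ := h₂
  obtain rfl := ho₁.stable.eq_of_wSil_of_wSil ho₂.stable hc₁ hc₂
  rw [DownTr, ho₁] at ho₂
  simpa using ho₂

theorem WOut.not_wDone {c d : M.Wr} {s₁ s₂ : S} (h₁ : WOut M c s₁ d) : ¬ WDone M c s₂ := by
  rintro ⟨e₂, hc₂, ho₂⟩
  obtain ⟨e₁, hc₁, ho₁⟩ := h₁
  obtain rfl := ho₁.stable.eq_of_wSil_of_wSil ho₂.stable hc₁ hc₂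
  rw [DownTr, ho₁] at ho₂
  cases ho₂

theorem wOut_iff_of_wSil {c c' d : M.Wr} {s : S} (h : WSil M c c') :
    WOut M c s d ↔ WOut M c' s d :=
  ⟨fun ⟨e, hce, ho⟩ => ⟨e, ho.stable.wSil_of_wSil hce h, ho⟩,
    fun ⟨e, hce, ho⟩ => ⟨e, h.trans hce, ho⟩⟩

theorem wDone_iff_of_wSil {c c' : M.Wr} {s : S} (h : WSil M c c') :
    WDone M c s ↔ WDone M c' s :=
  ⟨fun ⟨e, hce, ho⟩ => ⟨e, ho.stable.wSil_of_wSil hce h, ho⟩,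
    fun ⟨e, hce, ho⟩ => ⟨e, h.trans hce, ho⟩⟩

theorem trcEntry_zero_inl_iff {c : M.Wr} {s : S} :
    TrcEntry M c 0 (.inl s) ↔ ∃ d, WOut M c s d := by
  simp [TrcEntry, ReachL]

theorem trcEntry_zero_inr_iff {c : M.Wr} {s : S} : TrcEntry M c 0 (.inr s) ↔ WDone M c s := by
  simp [TrcEntry, ReachL]

theorem trcEntry_succ_iff {c : M.Wr} {n : ℕ} {v : S ⊕ S} :
    TrcEntry M c (n + 1) v ↔ ∃ s c', WOut M c s c' ∧ TrcEntry M c' n v := by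
  simp only [TrcEntry, List.length_eq_succ_iff]
  constructor
  · rintro (⟨_, d, s, d', hr, ⟨s₀, l, rfl, hl⟩, ho, rfl⟩ |
        ⟨_, d, s, hr, ⟨s₀, l, rfl, hl⟩, ho, rfl⟩) <;>
      obtain ⟨c', ho', hr'⟩ := hr
    · exact ⟨s₀, c', ho', .inl ⟨l, d, s, d', hr', hl, ho, rfl⟩⟩
    · exact ⟨s₀, c', ho', .inr ⟨l, d, s, hr', hl, ho, rfl⟩⟩
  · rintro ⟨s₀, c', ho', ⟨l, d, s, d', hr, hl, ho, rfl⟩ | ⟨l, d, s, hr, hl, ho, rfl⟩⟩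
    · exact .inl ⟨s₀ :: l, d, s, d', ⟨c', ho', hr⟩, ⟨s₀, l, rfl, hl⟩, ho, rfl⟩
    · exact .inr ⟨s₀ :: l, d, s, ⟨c', ho', hr⟩, ⟨s₀, l, rfl, hl⟩, ho, rfl⟩

theorem TrcEntry.unique {c : M.Wr} {n : ℕ} {v v' : S ⊕ S} (h : TrcEntry M c n v)
    (h' : TrcEntry M c n v') : v = v' := by
  induction n generalizing c with
  | zero =>
    rcases v with s | s <;> rcases v' with s' | s'
    · obtain ⟨_, ho⟩ := trcEntry_zero_inl_iff.mp h
      obtain ⟨_, ho'⟩ := trcEntry_zero_inl_iff.mp h'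
      rw [(ho.unique ho').1]
    · obtain ⟨_, ho⟩ := trcEntry_zero_inl_iff.mp h
      exact (ho.not_wDone (trcEntry_zero_inr_iff.mp h')).elim
    · obtain ⟨_, ho'⟩ := trcEntry_zero_inl_iff.mp h'
      exact (ho'.not_wDone (trcEntry_zero_inr_iff.mp h)).elim
    · rw [(trcEntry_zero_inr_iff.mp h).unique (trcEntry_zero_inr_iff.mp h')]
  | succ n ih =>
    obtain ⟨s, c₁, ho, h₁⟩ := trcEntry_succ_iff.mp h
    obtain ⟨s', c₁', ho', h₁'⟩ := trcEntry_succ_iff.mp h'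
    obtain ⟨rfl, rfl⟩ := ho.unique ho'
    exact ih h₁ h₁'

theorem WOut.trcEntry_succ_iff {c c' : M.Wr} {s : S} (h : WOut M c s c') {n : ℕ}
    {v : S ⊕ S} : TrcEntry M c (n + 1) v ↔ TrcEntry M c' n v := by
  refine RW.trcEntry_succ_iff.trans ⟨fun ⟨s', c'', ho, he⟩ => ?_, fun he => ⟨s, c', h, he⟩⟩
  obtain ⟨rfl, rfl⟩ := ho.unique h
  exact he

theorem trcEntry_iff_of_wSil {c c' : M.Wr} (h : WSil M c c') {n : ℕ} {v : S ⊕ S} :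
    TrcEntry M c n v ↔ TrcEntry M c' n v := by
  rcases n with _ | n
  · rcases v with s | s
    · simp only [trcEntry_zero_inl_iff, wOut_iff_of_wSil h]
    · simp only [trcEntry_zero_inr_iff, wDone_iff_of_wSil h]
  · simp only [trcEntry_succ_iff, wOut_iff_of_wSil h]

theorem TrcEntry.le_of_inr {c : M.Wr} {k n : ℕ} {s : S} {v : S ⊕ S}
    (hk : TrcEntry M c k (.inr s)) (hn : TrcEntry M c n v) : n ≤ k := by
  induction k generalizing c n with
  | zero =>
    rcases n with _ | n
    · rfl
    · obtain ⟨_, _, ho, _⟩ := trcEntry_succ_iff.mp hn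
      exact (ho.not_wDone (trcEntry_zero_inr_iff.mp hk)).elim
  | succ k ih =>
    obtain ⟨_, c₁, ho, hk₁⟩ := trcEntry_succ_iff.mp hk
    rcases n with _ | n
    · exact k.zero_le.trans k.le_succ
    · exact Nat.succ_le_succ (ih hk₁ (ho.trcEntry_succ_iff.mp hn))

theorem trcW_eq_some_iff {c : M.Wr} {n : ℕ} {v : S ⊕ S} :
    trcW M c n = some v ↔ TrcEntry M c n v := by
  unfold trcW
  split_ifs with h
  · exact ⟨fun hv => Option.some.inj hv ▸ h.choose_spec,
      fun hv => congrArg some (h.choose_spec.unique hv)⟩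
  · exact iff_of_false id fun hv => h ⟨v, hv⟩

theorem trcW_eq_trcW_iff {c d : M.Wr} :
    trcW M c = trcW M d ↔ ∀ n v, TrcEntry M c n v ↔ TrcEntry M d n v := by
  simp only [← trcW_eq_some_iff, funext_iff]
  exact forall_congr' fun n => Option.ext_iff

theorem exists_trcEntry_zero (hwf : WellFounded (flip (TauTr M))) (c : M.Wr) :
    ∃ v, TrcEntry M c 0 v := by
  induction c using hwf.induction with
  | _ c ih =>
    rcases hc : M.wstep c with ⟨d, s⟩ | d | s
    · exact ⟨.inl s, trcEntry_zero_inl_iff.mpr ⟨d, c, .refl, hc⟩⟩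
    · obtain ⟨v, hv⟩ := ih d hc
      exact ⟨v, (trcEntry_iff_of_wSil (.single hc)).mpr hv⟩
    · exact ⟨.inr s, trcEntry_zero_inr_iff.mpr ⟨c, .refl, hc⟩⟩

theorem exists_trcEntry_or_trcEntry_inr (hwf : WellFounded (flip (TauTr M))) (c : M.Wr)
    (n : ℕ) : (∃ v, TrcEntry M c n v) ∨ ∃ k < n, ∃ s, TrcEntry M c k (.inr s) := by
  induction n generalizing c with
  | zero => exact .inl (exists_trcEntry_zero hwf c)
  | succ n ih =>
    obtain ⟨s | s, hs⟩ := exists_trcEntry_zero hwf c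
    · obtain ⟨c₁, ho⟩ := trcEntry_zero_inl_iff.mp hs
      rcases ih c₁ with ⟨v, hv⟩ | ⟨k, hk, s', hs'⟩
      · exact .inl ⟨v, ho.trcEntry_succ_iff.mpr hv⟩
      · exact .inr ⟨k + 1, by omega, s', ho.trcEntry_succ_iff.mpr hs'⟩
    · exact .inr ⟨0, n.succ_pos, s, hs⟩

theorem trcEntry_iff_of_imp (hwf : WellFounded (flip (TauTr M))) {c d : M.Wr}
    (h : ∀ n v, TrcEntry M c n v → TrcEntry M d n v) (n : ℕ) (v : S ⊕ S) :
    TrcEntry M c n v ↔ TrcEntry M d n v := by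
  refine ⟨h n v, fun hd => ?_⟩
  rcases exists_trcEntry_or_trcEntry_inr hwf c n with ⟨v', hc⟩ | ⟨k, hk, s, hs⟩
  · rwa [(h n v' hc).unique hd] at hc
  · exact absurd ((h k _ hs).le_of_inr hd) (not_le.mpr hk)

namespace IsTraceSim

variable {Rr : M.Rd → M.Rd → Prop} {Rw : M.Wr → M.Wr → Prop}

theorem wSil (hR : IsTraceSim M Rr Rw) {c c' d : M.Wr} (h : WSil M c c') (hcd : Rw c d) :
    ∃ d', WSil M d d' ∧ Rw c' d' := by
  induction h with
  | refl => exact ⟨d, .refl, hcd⟩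
  | tail _ hτ ih =>
    obtain ⟨d₁, hd₁, hcd₁⟩ := ih
    obtain ⟨d', hd', hcd'⟩ := hR.2.1 _ _ _ hcd₁ hτ
    exact ⟨d', hd₁.trans hd', hcd'⟩

theorem wOut (hR : IsTraceSim M Rr Rw) {c c' d : M.Wr} {s : S} (h : WOut M c s c')
    (hcd : Rw c d) : ∃ d', WOut M d s d' ∧ Rw c' d' := by
  obtain ⟨e, hce, ho⟩ := h
  obtain ⟨d₁, hd₁, hed₁⟩ := hR.wSil hce hcd
  obtain ⟨d', ⟨e', hd₁e', ho'⟩, hcd'⟩ := hR.2.2.1 _ _ _ _ hed₁ ho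
  exact ⟨d', ⟨e', hd₁.trans hd₁e', ho'⟩, hcd'⟩

theorem wDone (hR : IsTraceSim M Rr Rw) {c d : M.Wr} {s : S} (h : WDone M c s)
    (hcd : Rw c d) : WDone M d s := by
  obtain ⟨e, hce, hdn⟩ := h
  obtain ⟨d₁, hd₁, hed₁⟩ := hR.wSil hce hcd
  obtain ⟨e', hd₁e', hdn'⟩ := hR.2.2.2 _ _ _ hed₁ hdn
  exact ⟨e', hd₁.trans hd₁e', hdn'⟩

theorem trcEntry (hR : IsTraceSim M Rr Rw) {c d : M.Wr} {n : ℕ} {v : S ⊕ S}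
    (h : TrcEntry M c n v) (hcd : Rw c d) : TrcEntry M d n v := by
  induction n generalizing c d with
  | zero =>
    rcases v with s | s
    · obtain ⟨c', ho⟩ := trcEntry_zero_inl_iff.mp h
      obtain ⟨d', ho', -⟩ := hR.wOut ho hcd
      exact trcEntry_zero_inl_iff.mpr ⟨d', ho'⟩
    · exact trcEntry_zero_inr_iff.mpr (hR.wDone (trcEntry_zero_inr_iff.mp h) hcd)
  | succ n ih =>
    obtain ⟨s, c', ho, h'⟩ := trcEntry_succ_iff.mp h
    obtain ⟨d', ho', hcd'⟩ := hR.wOut ho hcd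
    exact trcEntry_succ_iff.mpr ⟨s, d', ho', ih h' hcd'⟩

theorem trcW_eq (hR : IsTraceSim M Rr Rw) (hwf : WellFounded (flip (TauTr M))) {c d : M.Wr}
    (hcd : Rw c d) : trcW M c = trcW M d :=
  trcW_eq_trcW_iff.mpr (trcEntry_iff_of_imp hwf fun _ _ h => hR.trcEntry h hcd)

theorem trcR_eq (hR : IsTraceSim M Rr Rw) (hwf : WellFounded (flip (TauTr M))) {p q : M.Rd}
    (hpq : Rr p q) : trcR M p = trcR M q := funext fun s => by
  obtain ⟨_, rfl, hcd⟩ := hR.1 p q s _ hpq rfl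
  exact hR.trcW_eq hwf hcd

end IsTraceSim

theorem isTraceSim_trace_eq (M : DRW S) :
    IsTraceSim M (fun p q => trcR M p = trcR M q) (fun c d => trcW M c = trcW M d) := by
  refine ⟨?_, ?_, ?_, ?_⟩
  · rintro p q s c hpq rfl
    exact ⟨_, rfl, congrFun hpq s⟩
  · intro c d c' hcd hτ
    have hc' : trcW M c' = trcW M c :=
      trcW_eq_trcW_iff.mpr fun _ _ => (trcEntry_iff_of_wSil (.single hτ)).symm
    exact ⟨d, .refl, hc'.trans hcd⟩
  · intro c d s c' hcd ho
    have hc : WOut M c s c' := ⟨c, .refl, ho⟩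
    obtain ⟨d', hd⟩ := trcEntry_zero_inl_iff.mp
      ((trcW_eq_trcW_iff.mp hcd 0 _).mp (trcEntry_zero_inl_iff.mpr ⟨c', hc⟩))
    refine ⟨d', hd, trcW_eq_trcW_iff.mpr fun n v => ?_⟩
    rw [← hc.trcEntry_succ_iff, ← hd.trcEntry_succ_iff]
    exact trcW_eq_trcW_iff.mp hcd _ _
  · intro c d s hcd hdn
    exact trcEntry_zero_inr_iff.mp
      ((trcW_eq_trcW_iff.mp hcd 0 _).mp (trcEntry_zero_inr_iff.mpr ⟨c, .refl, hdn⟩))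

/-- in a deterministic reader–writer transition system with no
infinite chain of consecutive silent writer transitions, trace similarity coincides
with trace equivalence, both on readers and on writers. -/
theorem trace_similarity_eq_trace_equivalence (M : DRW S)
    (nodiv : ¬ ∃ f : ℕ → M.Wr, ∀ n, TauTr M (f n) (f (n + 1))) :
    (∀ p q : M.Rd, TraceSimR M p q ↔ trcR M p = trcR M q) ∧
    (∀ c d : M.Wr, TraceSimW M c d ↔ trcW M c = trcW M d) := by
  have hwf : WellFounded (flip (TauTr M)) :=
    wellFounded_iff_isEmpty_descending_chain.mpr ⟨fun ⟨f, hf⟩ => nodiv ⟨f, hf⟩⟩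
  exact ⟨fun p q => ⟨fun ⟨_, _, hR, hpq⟩ => hR.trcR_eq hwf hpq,
      fun h => ⟨_, _, isTraceSim_trace_eq M, h⟩⟩,
    fun c d => ⟨fun ⟨_, _, hR, hcd⟩ => hR.trcW_eq hwf hcd,
      fun h => ⟨_, _, isTraceSim_trace_eq M, h⟩⟩⟩

end RW
end
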